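/- Let f(X) = X^2 + 1 in ℚ[X] and for n ≥ 1 let f^(n) denote the n-th iterate of f under polynomial composition. Then for every n ≥ 1 the polynomial f^(n) is irreducible over ℚ. -/
import Mathlib


open Polynomial

/-- The `n`-th iterate of `f(X) = X^2 + 1` under polynomial composition:
`fIter 0 = X`, `fIter (n+1) = (fIter n).comp (X^2 + 1)`, so `fIter 1 = X^2 + 1`. -/
noncomputable def fIter : ℕ → Polynomial ℚ
  | 0 => Polynomial.X
  | n + 1 => (fIter n).comp (Polynomial.X ^ 2 + 1)

/-- Integer version of the iterates. -/
noncomputable def fIterZ : ℕ → Polynomial ℤ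
  | 0 => Polynomial.X
  | n + 1 => (fIterZ n).comp (Polynomial.X ^ 2 + 1)

lemma monic_sq : (Polynomial.X ^ 2 + 1 : Polynomial ℤ).Monic := by
  simpa using Polynomial.monic_X_pow_add_C (a := (1 : ℤ)) (n := 2) two_ne_zero

lemma natDegree_sq : (Polynomial.X ^ 2 + 1 : Polynomial ℤ).natDegree = 2 := by
  simpa using Polynomial.natDegree_X_pow_add_C (n := 2) (r := (1 : ℤ))

lemma fIterZ_map (n : ℕ) : (fIterZ n).map (Int.castRingHom ℚ) = fIter n := by
  induction n with
  | zero => simp [fIterZ, fIter]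
  | succ n ih => simp [fIterZ, fIter, Polynomial.map_comp, ih]

lemma fIterZ_monic (n : ℕ) : (fIterZ n).Monic := by
  induction n with
  | zero => simpa [fIterZ] using Polynomial.monic_X
  | succ n ih =>
    rw [fIterZ]
    exact ih.comp monic_sq (by rw [natDegree_sq]; norm_num)

lemma fIterZ_natDegree (n : ℕ) : (fIterZ n).natDegree = 2 ^ n := by
  induction n with
  | zero => simp [fIterZ]
  | succ n ih =>
    rw [fIterZ, Polynomial.natDegree_comp, ih, natDegree_sq, pow_succ]

lemma fIterZ_succ' (n : ℕ) :
    fIterZ (n + 1) = (Polynomial.X ^ 2 + 1 : Polynomial ℤ).comp (fIterZ n) := by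
  induction n with
  | zero => simp [fIterZ]
  | succ n ih =>
    have h1 : fIterZ (n + 1 + 1) = (fIterZ (n + 1)).comp (Polynomial.X ^ 2 + 1) := rfl
    have h2 : fIterZ (n + 1) = (fIterZ n).comp (Polynomial.X ^ 2 + 1) := rfl
    rw [h1, ih, Polynomial.comp_assoc, ← h2, ih]

lemma fIterZ_eval_zero_succ (n : ℕ) :
    (fIterZ (n + 1)).eval 0 = ((fIterZ n).eval 0) ^ 2 + 1 := by
  rw [fIterZ_succ', Polynomial.eval_comp]
  simp

lemma fIterZ_eval_zero_parity (n : ℕ) :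
    (Even n → Even ((fIterZ n).eval 0)) ∧ (Odd n → Odd ((fIterZ n).eval 0)) := by
  induction n with
  | zero => simp [fIterZ]
  | succ n ih =>
    rw [fIterZ_eval_zero_succ]
    constructor
    · intro h
      have hodd : Odd n := Nat.not_even_iff_odd.mp (Nat.even_add_one.mp h)
      obtain ⟨k, hk⟩ := ih.2 hodd
      exact ⟨2 * k ^ 2 + 2 * k + 1, by rw [hk]; ring⟩
    · intro h
      have heven : Even n := by
        obtain ⟨k, hk⟩ := h
        exact ⟨k, by omega⟩
      obtain ⟨r, hr⟩ := ih.1 heven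
      exact ⟨2 * r ^ 2, by rw [hr]; ring⟩

lemma fIterZ_eval_zero_even_mod4 (n : ℕ) (hn : Even n) (h1 : 1 ≤ n) :
    (fIterZ n).eval 0 % 4 = 2 := by
  obtain ⟨m, rfl⟩ : ∃ m, n = m + 1 := ⟨n - 1, by omega⟩
  have hm : Odd m := Nat.not_even_iff_odd.mp (Nat.even_add_one.mp hn)
  obtain ⟨k, hk⟩ := (fIterZ_eval_zero_parity m).2 hm
  rw [fIterZ_eval_zero_succ, hk]
  have : (2 * k + 1) ^ 2 + 1 = 4 * (k ^ 2 + k) + 2 := by ring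
  omega

lemma two_eq_zero : (2 : Polynomial (ZMod 2)) = 0 := by
  simpa using CharP.cast_eq_zero (Polynomial (ZMod 2)) 2

lemma map2_sq : (Polynomial.X ^ 2 + 1 : Polynomial ℤ).map (Int.castRingHom (ZMod 2)) =
    (Polynomial.X + 1 : Polynomial (ZMod 2)) ^ 2 := by
  rw [Polynomial.map_add, Polynomial.map_pow, Polynomial.map_X, Polynomial.map_one,
    show (Polynomial.X + 1 : Polynomial (ZMod 2)) ^ 2 =
      Polynomial.X ^ 2 + 2 * Polynomial.X + 1 from by ring, two_eq_zero]
  ring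

/-- Mod 2 reduction of the iterates. -/
lemma fIterZ_mod2 (n : ℕ) :
    (fIterZ n).map (Int.castRingHom (ZMod 2)) =
      (Polynomial.X + (if Even n then 0 else 1)) ^ (2 ^ n) := by
  induction n with
  | zero => simp [fIterZ]
  | succ n ih =>
    rw [show fIterZ (n + 1) = (fIterZ n).comp (Polynomial.X ^ 2 + 1) from rfl,
      Polynomial.map_comp, ih, map2_sq]
    rcases Nat.even_or_odd n with he | ho
    · rw [if_pos he, if_neg (by simp [Nat.even_add_one, he]), add_zero,
        Polynomial.X_pow_comp, ← pow_mul]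
      congr 1
      rw [pow_succ]
      ring
    · rw [if_neg (Nat.not_even_iff_odd.mpr ho),
        if_pos (Nat.even_add_one.mpr (Nat.not_even_iff_odd.mpr ho)), add_zero,
        Polynomial.pow_comp, Polynomial.add_comp, Polynomial.X_comp, Polynomial.one_comp,
        show ((Polynomial.X + 1 : Polynomial (ZMod 2)) ^ 2 + 1) =
          Polynomial.X ^ 2 + 2 * (Polynomial.X + 1) from by ring, two_eq_zero]
      rw [zero_mul, add_zero, ← pow_mul]
      congr 1
      rw [pow_succ]
      ring

lemma eisenstein_irreducible {n : ℕ} (p : Polynomial ℤ) (hmonic : p.Monic)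
    (hdeg : p.natDegree = 2 ^ n) (hn : 1 ≤ n)
    (hmod2 : p.map (Int.castRingHom (ZMod 2)) = Polynomial.X ^ (2 ^ n))
    (hconst : p.eval 0 % 4 = 2) : Irreducible p := by
  have hP : (Ideal.span {(2 : ℤ)}).IsPrime :=
    (Ideal.span_singleton_prime (by norm_num)).mpr Int.prime_two
  have heis : p.IsEisensteinAt (Ideal.span {(2 : ℤ)}) := by
    constructor
    · rw [hmonic.leadingCoeff, Ideal.mem_span_singleton]
      norm_num
    · intro i hi
      rw [Ideal.mem_span_singleton]
      have h0 : ((p.coeff i : ZMod 2)) = 0 := by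
        have h := congrArg (fun q => Polynomial.coeff q i) hmod2
        simp only [Polynomial.coeff_map, Polynomial.coeff_X_pow] at h
        rw [if_neg (by rw [hdeg] at hi; omega)] at h
        simpa using h
      exact (ZMod.intCast_zmod_eq_zero_iff_dvd _ 2).mp h0
    · rw [Ideal.span_singleton_pow, Ideal.mem_span_singleton,
        Polynomial.coeff_zero_eq_eval_zero]
      intro h
      rw [show ((2 : ℤ) ^ 2) = 4 from by norm_num] at h
      omega
  exact heis.irreducible hP hmonic.isPrimitive (by rw [hdeg]; positivity)

/-- Odoni: every iterate of `X^2 + 1` is irreducible over `ℚ`. -/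
theorem iterate_irreducible (n : ℕ) (hn : 1 ≤ n) :
    Irreducible (fIter n) := by
  rcases Nat.even_or_odd n with he | ho
  · -- even case: fIterZ n is Eisenstein at 2
    have hZ : Irreducible (fIterZ n) := by
      apply eisenstein_irreducible (n := n) _ (fIterZ_monic n) (fIterZ_natDegree n) hn
      · rw [fIterZ_mod2, if_pos he, add_zero]
      · exact fIterZ_eval_zero_even_mod4 n he hn
    have h := ((fIterZ_monic n).irreducible_iff_irreducible_map_fraction_map (K := ℚ)).mp hZ
    rwa [show algebraMap ℤ ℚ = Int.castRingHom ℚ from rfl, fIterZ_map] at h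
  · -- odd case: shift by 1
    set q : Polynomial ℤ := (fIterZ n).comp (Polynomial.X + Polynomial.C 1) with hq
    have hqmonic : q.Monic :=
      (fIterZ_monic n).comp (Polynomial.monic_X_add_C 1)
        (by rw [Polynomial.natDegree_X_add_C]; norm_num)
    have hqdeg : q.natDegree = 2 ^ n := by
      rw [hq, Polynomial.natDegree_comp, fIterZ_natDegree, Polynomial.natDegree_X_add_C,
        mul_one]
    have hZ : Irreducible q := by
      apply eisenstein_irreducible (n := n) q hqmonic hqdeg hn
      · rw [hq, Polynomial.map_comp, fIterZ_mod2, if_neg (Nat.not_even_iff_odd.mpr ho)]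
        simp only [Polynomial.map_add, Polynomial.map_X, Polynomial.map_C, map_one,
          Polynomial.map_one]
        rw [Polynomial.pow_comp, Polynomial.add_comp, Polynomial.X_comp, Polynomial.one_comp,
          show (Polynomial.X + (1 : Polynomial (ZMod 2)) + 1) =
            Polynomial.X + 2 * 1 from by ring, two_eq_zero]
        rw [zero_mul, add_zero]
      · have h0 : q.eval 0 = (fIterZ n).eval 1 := by
          rw [hq, Polynomial.eval_comp]; simp
        have h01 : (fIterZ n).eval 1 = (fIterZ (n + 1)).eval 0 := by
          rw [show fIterZ (n + 1) = (fIterZ n).comp (Polynomial.X ^ 2 + 1) from rfl,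
            Polynomial.eval_comp]
          norm_num
        rw [h0, h01]
        exact fIterZ_eval_zero_even_mod4 (n + 1)
          (Nat.even_add_one.mpr (Nat.not_even_iff_odd.mpr ho)) (by omega)
    have hQ := (hqmonic.irreducible_iff_irreducible_map_fraction_map (K := ℚ)).mp hZ
    rw [show algebraMap ℤ ℚ = Int.castRingHom ℚ from rfl, hq, Polynomial.map_comp,
      fIterZ_map] at hQ
    simp only [Polynomial.map_add, Polynomial.map_X, Polynomial.map_C, Int.cast_one] at hQ
    have key : (Polynomial.algEquivAevalXAddC (1 : ℚ)) (fIter n) =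
        (fIter n).comp (Polynomial.X + Polynomial.C 1) := by
      simp [Polynomial.algEquivAevalXAddC_apply, Polynomial.comp, Polynomial.aeval_def,
        Polynomial.eval₂_eq_eval_map]
    have hir : Irreducible ((Polynomial.algEquivAevalXAddC (1 : ℚ)) (fIter n)) := by
      rw [key]; exact hQ
    exact (MulEquiv.irreducible_iff
      (Polynomial.algEquivAevalXAddC (1 : ℚ)).toMulEquiv).mp hir
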